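/- Unweighted bound for sparse forms: let 1 ≤ p₀ < p < q₀ ≤ ∞ and let 𝒮 be an η-sparse collection of dyadic cubes. Then Σ_{Q∈𝒮} ⟨f⟩_{p₀,Q} ⟨g⟩_{q₀',Q} |Q| ≤ η^{-1} ((p/p₀)')^{1/p₀} ((p'/q₀')')^{1/q₀'} ‖f‖_{L^p} ‖g‖_{L^{p'}} for all f ∈ L^p, g ∈ L^{p'}. -/

import Mathlib

/-!
For `x ∈ Q` the product `⟨f⟩_{p₀,Q} ⟨g⟩_{q₀',Q}` is at most `ℳ_{p₀} f (x) · ℳ_{q₀'} g (x)`, where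
`ℳ_s f = (M (f ^ s)) ^ (1 / s)` and `M` is the maximal operator of the sparse collection. Since the
sets `E_Q` are disjoint and `|Q| ≤ η⁻¹ |E_Q|`, the sparse form is therefore at most
`η⁻¹ ∫ ℳ_{p₀} f · ℳ_{q₀'} g`, and Hölder's inequality with exponents `p, p'` reduces the claim to
`‖ℳ_s f‖_p ≤ ((p/s)')^{1/s} ‖f‖_p` for `s < p`, i.e. to Doob's inequality `‖M h‖_r ≤ r' ‖h‖_r`
with `r = p/s > 1`.

For a nested collection, `{M h > t}` is the disjoint union of the maximal cubes on which the
average of `h` exceeds `t`, so `t μ {M h > t} ≤ ∫_{M h > t} h`. Integrating this against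
`r t^(r-2) dt` (layer cake) gives `‖M h‖_r^r ≤ r' ∫ h (M h)^(r-1) ≤ r' ‖h‖_r ‖M h‖_r^(r-1)`, and
dividing by `‖M h‖_r^(r-1)` is legitimate for finite subcollections, from which the general case
follows by monotone convergence.
-/

open MeasureTheory
open scoped ENNReal

/-- The `L^t` average `⟨f⟩_{t,Q}` over `Q` (w.r.t. `μ`), with the `esssup` interpretation for
`t = ∞`. -/
noncomputable def eAvg {α : Type*} [MeasurableSpace α] (μ : Measure α) (Q : Set α)
    (t : ℝ≥0∞) (f : α → ℝ≥0∞) : ℝ≥0∞ :=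
  if t = ∞ then essSup f (μ.restrict Q)
  else ((μ Q)⁻¹ * ∫⁻ x in Q, f x ^ t.toReal ∂μ) ^ (t.toReal)⁻¹

/-- The conjugate exponent `t' = t/(t−1)`. -/
noncomputable def conjR (t : ℝ) : ℝ := t / (t - 1)

open Set

lemma holderConjugate_conjR {r : ℝ} (hr : 1 < r) : r.HolderConjugate (conjR r) :=
  Real.HolderConjugate.conjExponent hr

section Nested

variable {α : Type*}

/-- The combinatorial property of a dyadic grid that the argument uses. -/
def IsNested (𝒜 : Set (Set α)) : Prop :=
  ∀ Q ∈ 𝒜, ∀ Q' ∈ 𝒜, Disjoint Q Q' ∨ Q ⊆ Q' ∨ Q' ⊆ Q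

lemma IsNested.mono {𝒜 ℬ : Set (Set α)} (hℬ : IsNested ℬ) (h𝒜ℬ : 𝒜 ⊆ ℬ) : IsNested 𝒜 :=
  fun Q hQ Q' hQ' => hℬ Q (h𝒜ℬ hQ) Q' (h𝒜ℬ hQ')

end Nested

lemma ENNReal.le_rpow_of_le_mul_rpow {X A : ℝ≥0∞} {r r' : ℝ} (hrr' : r.HolderConjugate r')
    (hX : X ≠ ∞) (h : X ≤ A * X ^ r'⁻¹) : X ≤ A ^ r := by
  rcases eq_or_ne X 0 with rfl | hX0
  · exact zero_le
  have hsplit : X ^ r⁻¹ * X ^ r'⁻¹ = X := by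
    rw [← ENNReal.rpow_add _ _ hX0 hX, hrr'.inv_add_inv_eq_one, ENNReal.rpow_one]
  have hX' : X ^ r'⁻¹ ≠ 0 := (ENNReal.rpow_pos (pos_iff_ne_zero.2 hX0) hX).ne'
  have hX'' : X ^ r'⁻¹ ≠ ∞ := ENNReal.rpow_ne_top_of_nonneg hrr'.symm.inv_nonneg hX
  have hle : X ^ r⁻¹ ≤ A := (ENNReal.mul_le_mul_iff_left hX' hX'').1 (by rwa [hsplit])
  calc X = (X ^ r⁻¹) ^ r := by
        rw [← ENNReal.rpow_mul, inv_mul_cancel₀ hrr'.ne_zero, ENNReal.rpow_one]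
    _ ≤ A ^ r := ENNReal.rpow_le_rpow hle hrr'.nonneg

section TailBound

variable {α : Type*} [MeasurableSpace α] {μ : Measure α} {F : α → ℝ} {h : α → ℝ≥0∞} {r : ℝ}

/-- Two applications of the layer cake formula, one for `μ` and one for `h • μ`. -/
theorem lintegral_rpow_le_of_tail_le (hF0 : 0 ≤ F) (hFm : Measurable F) (hh : Measurable h)
    (hr : 1 < r)
    (htail : ∀ t > 0, ENNReal.ofReal t * μ {x | t < F x} ≤ ∫⁻ x in {x | t < F x}, h x ∂μ) :
    ∫⁻ x, ENNReal.ofReal (F x) ^ r ∂μ ≤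
      ENNReal.ofReal (conjR r) * ∫⁻ x, h x * ENNReal.ofReal (F x) ^ (r - 1) ∂μ := by
  have hr0 : 0 < r := by linarith
  have hr1 : 0 < r - 1 := by linarith
  set σ := μ.withDensity h
  have layer_μ : ∫⁻ x, ENNReal.ofReal (F x) ^ r ∂μ =
      ENNReal.ofReal r * ∫⁻ t in Ioi 0, μ {x | t < F x} * ENNReal.ofReal (t ^ (r - 1)) := by
    rw [← lintegral_rpow_eq_lintegral_meas_lt_mul μ (ae_of_all _ hF0) hFm.aemeasurable hr0]
    exact lintegral_congr fun x => ENNReal.ofReal_rpow_of_nonneg (hF0 x) hr0.le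
  have layer_σ : ∫⁻ x, h x * ENNReal.ofReal (F x) ^ (r - 1) ∂μ =
      ENNReal.ofReal (r - 1) *
        ∫⁻ t in Ioi 0, σ {x | t < F x} * ENNReal.ofReal (t ^ (r - 1 - 1)) := by
    rw [← lintegral_rpow_eq_lintegral_meas_lt_mul σ (ae_of_all _ hF0) hFm.aemeasurable hr1,
      lintegral_withDensity_eq_lintegral_mul _ hh (hFm.pow_const _).ennreal_ofReal]
    exact lintegral_congr fun x => by
      simp only [Pi.mul_apply, ENNReal.ofReal_rpow_of_nonneg (hF0 x) hr1.le]
  have tail : ∫⁻ t in Ioi 0, μ {x | t < F x} * ENNReal.ofReal (t ^ (r - 1)) ≤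
      ∫⁻ t in Ioi 0, σ {x | t < F x} * ENNReal.ofReal (t ^ (r - 1 - 1)) := by
    refine setLIntegral_mono' measurableSet_Ioi fun t (ht : 0 < t) => ?_
    have hpow : t ^ (r - 1) = t * t ^ (r - 1 - 1) := by
      rw [Real.rpow_sub_one ht.ne' (r - 1), mul_div_cancel₀ _ ht.ne']
    rw [hpow, ENNReal.ofReal_mul ht.le, ← mul_assoc, mul_comm (μ _),
      withDensity_apply _ (measurableSet_lt measurable_const hFm)]
    gcongr
    exact htail t ht
  calc ∫⁻ x, ENNReal.ofReal (F x) ^ r ∂μ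
      ≤ ENNReal.ofReal r *
          ∫⁻ t in Ioi 0, σ {x | t < F x} * ENNReal.ofReal (t ^ (r - 1 - 1)) := by
        rw [layer_μ]; gcongr
    _ = ENNReal.ofReal (conjR r) * ∫⁻ x, h x * ENNReal.ofReal (F x) ^ (r - 1) ∂μ := by
        rw [layer_σ, ← mul_assoc, ← ENNReal.ofReal_mul (holderConjugate_conjR hr).symm.nonneg,
          mul_comm (conjR r), (holderConjugate_conjR hr).sub_one_mul_conj]

/-- Absorbing `‖F‖_r ^ (r - 1)` after Hölder's inequality needs `‖F‖_r < ∞`. -/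
theorem lintegral_rpow_le_of_tail_le_of_ne_top (hF0 : 0 ≤ F) (hFm : Measurable F)
    (hh : Measurable h) (hr : 1 < r)
    (htail : ∀ t > 0, ENNReal.ofReal t * μ {x | t < F x} ≤ ∫⁻ x in {x | t < F x}, h x ∂μ)
    (hX : ∫⁻ x, ENNReal.ofReal (F x) ^ r ∂μ ≠ ∞) :
    ∫⁻ x, ENNReal.ofReal (F x) ^ r ∂μ ≤ ENNReal.ofReal (conjR r) ^ r * ∫⁻ x, h x ^ r ∂μ := by
  have hrr' := holderConjugate_conjR hr
  have hHolder : ∫⁻ x, h x * ENNReal.ofReal (F x) ^ (r - 1) ∂μ ≤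
      (∫⁻ x, h x ^ r ∂μ) ^ r⁻¹ * (∫⁻ x, ENNReal.ofReal (F x) ^ r ∂μ) ^ (conjR r)⁻¹ := by
    have := ENNReal.lintegral_mul_le_Lp_mul_Lq μ hrr' hh.aemeasurable
      (hFm.ennreal_ofReal.pow_const (r - 1)).aemeasurable
    simpa only [Pi.mul_apply, ← ENNReal.rpow_mul, hrr'.sub_one_mul_conj, one_div] using this
  have hle : ∫⁻ x, ENNReal.ofReal (F x) ^ r ∂μ ≤
      ENNReal.ofReal (conjR r) * (∫⁻ x, h x ^ r ∂μ) ^ r⁻¹ *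
        (∫⁻ x, ENNReal.ofReal (F x) ^ r ∂μ) ^ (conjR r)⁻¹ := by
    rw [mul_assoc]
    exact (lintegral_rpow_le_of_tail_le hF0 hFm hh hr htail).trans (by gcongr)
  calc ∫⁻ x, ENNReal.ofReal (F x) ^ r ∂μ
      ≤ (ENNReal.ofReal (conjR r) * (∫⁻ x, h x ^ r ∂μ) ^ r⁻¹) ^ r :=
        ENNReal.le_rpow_of_le_mul_rpow hrr' hX hle
    _ = ENNReal.ofReal (conjR r) ^ r * ∫⁻ x, h x ^ r ∂μ := by
        rw [ENNReal.mul_rpow_of_nonneg _ _ hrr'.nonneg, ← ENNReal.rpow_mul,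
          inv_mul_cancel₀ hrr'.ne_zero, ENNReal.rpow_one]

end TailBound

section MaximalFunction

variable {α : Type*} [MeasurableSpace α] {μ : Measure α}

lemma setLAverage_mul_measure_le (s : Set α) (h : α → ℝ≥0∞) :
    (⨍⁻ x in s, h x ∂μ) * μ s ≤ ∫⁻ x in s, h x ∂μ := by
  rw [setLAverage_eq]
  rcases eq_or_ne (μ s) 0 with h0 | h0
  · simp [h0]
  rcases eq_or_ne (μ s) ∞ with htop | htop
  · simp [htop]
  · rw [ENNReal.div_mul_cancel h0 htop]

lemma setLIntegral_lt_top_of_lintegral_rpow_ne_top {s : Set α} (hs : μ s ≠ ∞)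
    {h : α → ℝ≥0∞} {r : ℝ} (hr : 1 ≤ r) (hK : ∫⁻ x, h x ^ r ∂μ ≠ ∞) :
    ∫⁻ x in s, h x ∂μ < ∞ := by
  have hpt : ∀ x, h x ≤ 1 + h x ^ r := fun x => by
    rcases le_total (h x) 1 with hx | hx
    · exact le_add_right hx
    · exact le_add_left (by simpa using ENNReal.rpow_le_rpow_of_exponent_le hx hr)
  calc ∫⁻ x in s, h x ∂μ ≤ ∫⁻ x in s, 1 + h x ^ r ∂μ := lintegral_mono hpt
    _ = μ s + ∫⁻ x in s, h x ^ r ∂μ := by rw [lintegral_add_left measurable_const, setLIntegral_one]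
    _ < ∞ := ENNReal.add_lt_top.2 ⟨hs.lt_top, (setLIntegral_le_lintegral _ _).trans_lt hK.lt_top⟩

/-- The maximal members of a finite nested collection are pairwise disjoint and cover its
union, so a lower bound on each member passes to the union. -/
lemma IsNested.mul_measure_sUnion_le {G : Set (Set α)} (hG : G.Finite) (hnest : IsNested G)
    (hm : ∀ Q ∈ G, MeasurableSet Q) {h : α → ℝ≥0∞} {T : ℝ≥0∞}
    (hT : ∀ Q ∈ G, T * μ Q ≤ ∫⁻ x in Q, h x ∂μ) :
    T * μ (⋃₀ G) ≤ ∫⁻ x in ⋃₀ G, h x ∂μ := by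
  set G' := {Q | Maximal (· ∈ G) Q}
  have hG'G : G' ⊆ G := fun Q hQ => hQ.prop
  have hcover : ⋃₀ G = ⋃₀ G' := by
    refine Subset.antisymm (fun x ⟨Q, hQ, hxQ⟩ => ?_) (sUnion_mono hG'G)
    obtain ⟨Q', hQQ', hQ'⟩ := hG.exists_le_maximal hQ
    exact ⟨Q', hQ', hQQ' hxQ⟩
  have hdisj : G'.Pairwise Disjoint := by
    intro Q hQ Q' hQ' hne
    rcases hnest Q hQ.prop Q' hQ'.prop with hd | hsub | hsub
    · exact hd
    · exact absurd (hQ.eq_of_le hQ'.prop hsub) hne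
    · exact absurd (hQ'.eq_of_le hQ.prop hsub).symm hne
  have hG'c : G'.Countable := (hG.subset hG'G).countable
  have hG'm : ∀ Q ∈ G', MeasurableSet Q := fun Q hQ => hm Q (hG'G hQ)
  rw [hcover, sUnion_eq_biUnion, measure_biUnion hG'c hdisj hG'm,
    lintegral_biUnion hG'c hG'm hdisj, ← ENNReal.tsum_mul_left]
  exact ENNReal.tsum_le_tsum fun Q => hT Q (hG'G Q.2)

noncomputable def maximalFunction (μ : Measure α) (𝒜 : Set (Set α)) (h : α → ℝ≥0∞) (x : α) :
    ℝ≥0∞ :=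
  ⨆ Q ∈ 𝒜, Q.indicator (fun _ => ⨍⁻ y in Q, h y ∂μ) x

variable {𝒜 : Set (Set α)} {h : α → ℝ≥0∞}

lemma measurable_maximalFunction (h𝒜 : 𝒜.Countable) (hm : ∀ Q ∈ 𝒜, MeasurableSet Q) :
    Measurable (maximalFunction μ 𝒜 h) :=
  Measurable.biSup _ h𝒜 fun Q hQ => measurable_const.indicator (hm Q hQ)

lemma setLAverage_le_maximalFunction {Q : Set α} (hQ : Q ∈ 𝒜) {x : α} (hx : x ∈ Q) :
    ⨍⁻ y in Q, h y ∂μ ≤ maximalFunction μ 𝒜 h x := by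
  refine le_iSup₂_of_le Q hQ ?_
  rw [indicator_of_mem hx]

lemma maximalFunction_mono {ℬ : Set (Set α)} (h𝒜ℬ : 𝒜 ⊆ ℬ) (x : α) :
    maximalFunction μ 𝒜 h x ≤ maximalFunction μ ℬ h x :=
  biSup_mono fun _ hQ => h𝒜ℬ hQ

lemma setOf_lt_maximalFunction (T : ℝ≥0∞) :
    {x | T < maximalFunction μ 𝒜 h x} = ⋃₀ {Q ∈ 𝒜 | T < ⨍⁻ y in Q, h y ∂μ} := by
  ext x
  simp only [maximalFunction, mem_ofPred_eq, lt_iSup_iff, mem_sUnion, indicator]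
  aesop

lemma maximalFunction_le_indicator {C : ℝ≥0∞} (hC : ∀ Q ∈ 𝒜, ⨍⁻ y in Q, h y ∂μ ≤ C) (x : α) :
    maximalFunction μ 𝒜 h x ≤ (⋃₀ 𝒜).indicator (fun _ => C) x := by
  refine iSup₂_le fun Q hQ => ?_
  by_cases hx : x ∈ Q
  · rw [indicator_of_mem hx, indicator_of_mem (mem_sUnion_of_mem hx hQ)]
    exact hC Q hQ
  · simp [hx]

lemma IsNested.mul_measure_lt_maximalFunction_le (h𝒜 : 𝒜.Finite) (hnest : IsNested 𝒜)
    (hm : ∀ Q ∈ 𝒜, MeasurableSet Q) (T : ℝ≥0∞) :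
    T * μ {x | T < maximalFunction μ 𝒜 h x} ≤
      ∫⁻ x in {x | T < maximalFunction μ 𝒜 h x}, h x ∂μ := by
  rw [setOf_lt_maximalFunction]
  refine (hnest.mono (sep_subset _ _)).mul_measure_sUnion_le (h𝒜.subset (sep_subset _ _))
    (fun Q hQ => hm Q hQ.1) fun Q hQ => ?_
  calc T * μ Q ≤ (⨍⁻ y in Q, h y ∂μ) * μ Q := by gcongr; exact hQ.2.le
    _ ≤ ∫⁻ y in Q, h y ∂μ := setLAverage_mul_measure_le Q h

lemma exists_maximalFunction_le_indicator_of_finite (h𝒜 : 𝒜.Finite) (hfin : ∀ Q ∈ 𝒜, μ Q ≠ ∞)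
    {r : ℝ} (hr : 1 ≤ r) (hK : ∫⁻ x, h x ^ r ∂μ ≠ ∞) :
    ∃ C ≠ ∞, ∀ x, maximalFunction μ 𝒜 h x ≤ (⋃₀ 𝒜).indicator (fun _ => C) x := by
  refine ⟨∑ Q ∈ h𝒜.toFinset, ⨍⁻ y in Q, h y ∂μ, ENNReal.sum_ne_top.2 fun Q hQ => ?_,
    maximalFunction_le_indicator fun Q hQ => ?_⟩
  · exact (setLAverage_lt_top (setLIntegral_lt_top_of_lintegral_rpow_ne_top
      (hfin Q (h𝒜.mem_toFinset.1 hQ)) hr hK).ne).ne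
  · exact Finset.single_le_sum (f := fun Q => ⨍⁻ y in Q, h y ∂μ) (fun _ _ => zero_le)
      (h𝒜.mem_toFinset.2 hQ)

lemma maximalFunction_ne_top_of_finite (h𝒜 : 𝒜.Finite) (hfin : ∀ Q ∈ 𝒜, μ Q ≠ ∞) {r : ℝ}
    (hr : 1 ≤ r) (hK : ∫⁻ x, h x ^ r ∂μ ≠ ∞) (x : α) : maximalFunction μ 𝒜 h x ≠ ∞ := by
  obtain ⟨C, hC, hMC⟩ := exists_maximalFunction_le_indicator_of_finite h𝒜 hfin hr hK
  exact ne_top_of_le_ne_top (by by_cases hx : x ∈ ⋃₀ 𝒜 <;> simp [hx, hC]) (hMC x)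

lemma lintegral_maximalFunction_rpow_ne_top_of_finite (h𝒜 : 𝒜.Finite)
    (hm : ∀ Q ∈ 𝒜, MeasurableSet Q) (hfin : ∀ Q ∈ 𝒜, μ Q ≠ ∞) {r : ℝ} (hr : 1 ≤ r)
    (hK : ∫⁻ x, h x ^ r ∂μ ≠ ∞) : ∫⁻ x, maximalFunction μ 𝒜 h x ^ r ∂μ ≠ ∞ := by
  have hr0 : 0 < r := by linarith
  obtain ⟨C, hC, hMC⟩ := exists_maximalFunction_le_indicator_of_finite h𝒜 hfin hr hK
  have hμU : μ (⋃₀ 𝒜) ≠ ∞ := by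
    rw [sUnion_eq_biUnion]
    exact (measure_biUnion_lt_top h𝒜 fun Q hQ => (hfin Q hQ).lt_top).ne
  have hpow : ∀ x,
      (⋃₀ 𝒜).indicator (fun _ => C) x ^ r = (⋃₀ 𝒜).indicator (fun _ => C ^ r) x := fun x => by
    by_cases hx : x ∈ ⋃₀ 𝒜 <;> simp [hx, hr0]
  refine ne_top_of_le_ne_top ?_ (lintegral_mono fun x => ENNReal.rpow_le_rpow (hMC x) hr0.le)
  simp only [hpow, lintegral_indicator_const (MeasurableSet.sUnion h𝒜.countable hm)]
  exact ENNReal.mul_ne_top (ENNReal.rpow_ne_top_of_nonneg hr0.le hC) hμU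

theorem IsNested.lintegral_maximalFunction_rpow_le_of_finite (h𝒜 : 𝒜.Finite)
    (hnest : IsNested 𝒜) (hm : ∀ Q ∈ 𝒜, MeasurableSet Q) (hfin : ∀ Q ∈ 𝒜, μ Q ≠ ∞)
    (hh : Measurable h) {r : ℝ} (hr : 1 < r) :
    ∫⁻ x, maximalFunction μ 𝒜 h x ^ r ∂μ ≤ ENNReal.ofReal (conjR r) ^ r * ∫⁻ x, h x ^ r ∂μ := by
  by_cases hK : ∫⁻ x, h x ^ r ∂μ = ∞
  · rw [hK, ENNReal.mul_top (ENNReal.rpow_pos (ENNReal.ofReal_pos.2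
      (holderConjugate_conjR hr).symm.pos) ENNReal.ofReal_ne_top).ne']
    exact le_top
  set M := maximalFunction μ 𝒜 h
  have hM : ∀ x, M x ≠ ∞ := maximalFunction_ne_top_of_finite h𝒜 hfin hr.le hK
  have htail : ∀ t > 0, ENNReal.ofReal t * μ {x | t < (M x).toReal} ≤
      ∫⁻ x in {x | t < (M x).toReal}, h x ∂μ := fun t ht => by
    simpa only [← ENNReal.ofReal_lt_iff_lt_toReal ht.le (hM _)] using
      hnest.mul_measure_lt_maximalFunction_le h𝒜 hm (ENNReal.ofReal t)
  simpa only [ENNReal.ofReal_toReal (hM _)] using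
    lintegral_rpow_le_of_tail_le_of_ne_top (F := fun x => (M x).toReal)
      (fun x => ENNReal.toReal_nonneg) (measurable_maximalFunction h𝒜.countable hm).ennreal_toReal
      hh hr htail (by simpa only [ENNReal.ofReal_toReal (hM _)] using
        lintegral_maximalFunction_rpow_ne_top_of_finite h𝒜 hm hfin hr.le hK)

theorem IsNested.lintegral_maximalFunction_rpow_le (h𝒜 : 𝒜.Countable) (hnest : IsNested 𝒜)
    (hm : ∀ Q ∈ 𝒜, MeasurableSet Q) (hfin : ∀ Q ∈ 𝒜, μ Q ≠ ∞) (hh : Measurable h) {r : ℝ}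
    (hr : 1 < r) :
    ∫⁻ x, maximalFunction μ 𝒜 h x ^ r ∂μ ≤ ENNReal.ofReal (conjR r) ^ r * ∫⁻ x, h x ^ r ∂μ := by
  have : Countable 𝒜 := h𝒜.to_subtype
  have hr0 : 0 < r := by linarith
  set 𝒜F : Finset 𝒜 → Set (Set α) := fun F => Subtype.val '' (F : Set 𝒜)
  have h𝒜F : ∀ F, 𝒜F F ⊆ 𝒜 := fun F => by simp [𝒜F]
  have hsup : ∀ x, maximalFunction μ 𝒜 h x ^ r = ⨆ F, maximalFunction μ (𝒜F F) h x ^ r := by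
    intro x
    calc maximalFunction μ 𝒜 h x ^ r = (⨆ F, maximalFunction μ (𝒜F F) h x) ^ r := by
          refine congrArg (· ^ r) (le_antisymm (iSup₂_le fun Q hQ => ?_)
            (iSup_le fun F => maximalFunction_mono (h𝒜F F) x))
          exact le_iSup_of_le {⟨Q, hQ⟩} (le_iSup₂_of_le Q (by simp [𝒜F]) le_rfl)
      _ = ⨆ F, maximalFunction μ (𝒜F F) h x ^ r := (ENNReal.orderIsoRpow r hr0).map_iSup _
  rw [lintegral_congr hsup, lintegral_iSup_directed]
  · exact iSup_le fun F => (hnest.mono (h𝒜F F)).lintegral_maximalFunction_rpow_le_of_finite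
      ((F.finite_toSet).image _) (fun Q hQ => hm Q (h𝒜F F hQ)) (fun Q hQ => hfin Q (h𝒜F F hQ)) hh hr
  · exact fun F => ((measurable_maximalFunction ((F.finite_toSet).image _).countable
      fun Q hQ => hm Q (h𝒜F F hQ)).pow_const r).aemeasurable
  · refine Monotone.directed_le fun F F' hFF' x => ENNReal.rpow_le_rpow ?_ hr0.le
    exact maximalFunction_mono (image_mono (Finset.coe_subset.2 hFF')) x

noncomputable def powMaximalFunction (μ : Measure α) (𝒜 : Set (Set α)) (s : ℝ)
    (f : α → ℝ≥0∞) (x : α) : ℝ≥0∞ :=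
  maximalFunction μ 𝒜 (fun y => f y ^ s) x ^ s⁻¹

lemma eAvg_le_powMaximalFunction {s : ℝ} (hs : 0 < s) {Q : Set α} (hQ : Q ∈ 𝒜) {x : α}
    (hx : x ∈ Q) (f : α → ℝ≥0∞) :
    eAvg μ Q (ENNReal.ofReal s) f ≤ powMaximalFunction μ 𝒜 s f x := by
  rw [eAvg, if_neg ENNReal.ofReal_ne_top, ENNReal.toReal_ofReal hs.le, ← ENNReal.div_eq_inv_mul,
    ← setLAverage_eq]
  exact ENNReal.rpow_le_rpow (setLAverage_le_maximalFunction hQ hx) (inv_nonneg.2 hs.le)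

lemma measurable_powMaximalFunction (h𝒜 : 𝒜.Countable) (hm : ∀ Q ∈ 𝒜, MeasurableSet Q)
    (s : ℝ) (f : α → ℝ≥0∞) : Measurable (powMaximalFunction μ 𝒜 s f) :=
  (measurable_maximalFunction h𝒜 hm).pow_const _

theorem IsNested.lintegral_powMaximalFunction_rpow_le (h𝒜 : 𝒜.Countable) (hnest : IsNested 𝒜)
    (hm : ∀ Q ∈ 𝒜, MeasurableSet Q) (hfin : ∀ Q ∈ 𝒜, μ Q ≠ ∞) {f : α → ℝ≥0∞}
    (hf : Measurable f) {s p : ℝ} (hs : 0 < s) (hsp : s < p) :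
    (∫⁻ x, powMaximalFunction μ 𝒜 s f x ^ p ∂μ) ^ (1 / p) ≤
      ENNReal.ofReal (conjR (p / s) ^ (1 / s)) * (∫⁻ x, f x ^ p ∂μ) ^ (1 / p) := by
  have hp : 0 < p := hs.trans hsp
  have hps : 1 < p / s := (one_lt_div hs).2 hsp
  have hM : ∫⁻ x, powMaximalFunction μ 𝒜 s f x ^ p ∂μ =
      ∫⁻ x, maximalFunction μ 𝒜 (fun y => f y ^ s) x ^ (p / s) ∂μ :=
    lintegral_congr fun x => by rw [powMaximalFunction, ← ENNReal.rpow_mul, inv_mul_eq_div]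
  have hfp : ∫⁻ x, (f x ^ s) ^ (p / s) ∂μ = ∫⁻ x, f x ^ p ∂μ :=
    lintegral_congr fun x => by rw [← ENNReal.rpow_mul, mul_div_cancel₀ _ hs.ne']
  calc (∫⁻ x, powMaximalFunction μ 𝒜 s f x ^ p ∂μ) ^ (1 / p)
      ≤ (ENNReal.ofReal (conjR (p / s)) ^ (p / s) * ∫⁻ x, f x ^ p ∂μ) ^ (1 / p) := by
        rw [hM, ← hfp]
        gcongr
        exact hnest.lintegral_maximalFunction_rpow_le h𝒜 hm hfin (hf.pow_const s) hps
    _ = ENNReal.ofReal (conjR (p / s) ^ (1 / s)) * (∫⁻ x, f x ^ p ∂μ) ^ (1 / p) := by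
        rw [ENNReal.mul_rpow_of_nonneg _ _ (one_div_nonneg.2 hp.le), ← ENNReal.rpow_mul,
          ENNReal.ofReal_rpow_of_pos (holderConjugate_conjR hps).symm.pos]
        congr 2
        field_simp

theorem IsNested.lintegral_powMaximalFunction_mul_le (h𝒜 : 𝒜.Countable) (hnest : IsNested 𝒜)
    (hm : ∀ Q ∈ 𝒜, MeasurableSet Q) (hfin : ∀ Q ∈ 𝒜, μ Q ≠ ∞) {f g : α → ℝ≥0∞}
    (hf : Measurable f) (hg : Measurable g) {s t p : ℝ} (hp : 1 < p) (hs : 0 < s) (hsp : s < p)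
    (ht : 0 < t) (htp : t < conjR p) :
    ∫⁻ x, powMaximalFunction μ 𝒜 s f x * powMaximalFunction μ 𝒜 t g x ∂μ ≤
      ENNReal.ofReal (conjR (p / s) ^ (1 / s)) * (∫⁻ x, f x ^ p ∂μ) ^ (1 / p) *
        (ENNReal.ofReal (conjR (conjR p / t) ^ (1 / t)) *
          (∫⁻ x, g x ^ conjR p ∂μ) ^ (1 / conjR p)) :=
  (ENNReal.lintegral_mul_le_Lp_mul_Lq μ (holderConjugate_conjR hp)
    (measurable_powMaximalFunction h𝒜 hm s f).aemeasurable
    (measurable_powMaximalFunction h𝒜 hm t g).aemeasurable).trans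
  (mul_le_mul' (hnest.lintegral_powMaximalFunction_rpow_le h𝒜 hm hfin hf hs hsp)
    (hnest.lintegral_powMaximalFunction_rpow_le h𝒜 hm hfin hg ht htp))

end MaximalFunction

section Sparse

variable {α : Type*} [MeasurableSpace α] {μ : Measure α}

lemma tsum_mul_measure_le_of_sparse {𝒮 : Set (Set α)} (h𝒮 : 𝒮.Countable) {E : Set α → Set α}
    (hEsub : ∀ Q ∈ 𝒮, E Q ⊆ Q) (hEmeas : ∀ Q ∈ 𝒮, MeasurableSet (E Q))
    (hEdisj : 𝒮.PairwiseDisjoint E) {C : ℝ≥0∞} (hsparse : ∀ Q ∈ 𝒮, μ Q ≤ C * μ (E Q))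
    {a : Set α → ℝ≥0∞} {Φ : α → ℝ≥0∞} (haΦ : ∀ Q ∈ 𝒮, ∀ x ∈ Q, a Q ≤ Φ x) :
    ∑' Q : 𝒮, a Q * μ Q ≤ C * ∫⁻ x, Φ x ∂μ := by
  calc ∑' Q : 𝒮, a Q * μ Q ≤ ∑' Q : 𝒮, C * ∫⁻ x in E Q, Φ x ∂μ := by
        refine ENNReal.tsum_le_tsum fun ⟨Q, hQ⟩ => ?_
        calc a Q * μ Q ≤ C * (a Q * μ (E Q)) := by
              rw [mul_left_comm]; gcongr; exact hsparse Q hQ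
          _ = C * ∫⁻ _ in E Q, a Q ∂μ := by rw [setLIntegral_const]
          _ ≤ C * ∫⁻ x in E Q, Φ x ∂μ := mul_le_mul_right
              (setLIntegral_mono' (hEmeas Q hQ) fun x hx => haΦ Q hQ x (hEsub Q hQ hx)) C
    _ = C * ∫⁻ x in ⋃ Q ∈ 𝒮, E Q, Φ x ∂μ := by
        rw [ENNReal.tsum_mul_left, lintegral_biUnion h𝒮 hEmeas hEdisj]
    _ ≤ C * ∫⁻ x, Φ x ∂μ := mul_le_mul_right (setLIntegral_le_lintegral _ _) C

end Sparse

lemma pos_and_lt_conjR_of_ofReal_lt {p : ℝ} (hp : 1 < p) {q : ℝ≥0∞} (hq : ENNReal.ofReal p < q) :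
    0 < (if q = ∞ then 1 else q.toReal / (q.toReal - 1)) ∧
      (if q = ∞ then 1 else q.toReal / (q.toReal - 1)) < conjR p := by
  have hp' := (holderConjugate_conjR hp).symm
  by_cases hqtop : q = ∞
  · simpa [hqtop] using hp'.lt
  have hpq : p < q.toReal := (ENNReal.ofReal_lt_iff_lt_toReal (by linarith) hqtop).1 hq
  rw [if_neg hqtop, conjR]
  exact ⟨div_pos (by linarith) (by linarith),
    (div_lt_div_iff₀ (by linarith) (by linarith)).2 (by nlinarith)⟩

theorem stmt_14_general {α : Type*} [MeasurableSpace α] (μ : Measure α)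
    (𝒟 : Set (Set α)) (hcount : 𝒟.Countable)
    (hmeas : ∀ Q ∈ 𝒟, MeasurableSet Q)
    (hfin : ∀ Q ∈ 𝒟, 0 < μ Q ∧ μ Q < ⊤)
    (hnest : ∀ Q ∈ 𝒟, ∀ Q' ∈ 𝒟, Disjoint Q Q' ∨ Q ⊆ Q' ∨ Q' ⊆ Q)
    (p₀ p : ℝ) (q₀ : ℝ≥0∞) (hp₀ : 1 ≤ p₀) (hp : p₀ < p) (hq₀ : ENNReal.ofReal p < q₀)
    (q₀' : ℝ) (hq₀' : q₀' = if q₀ = ∞ then 1 else q₀.toReal / (q₀.toReal - 1))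
    (η : ℝ)
    (𝒮 : Set (Set α)) (h𝒮 : 𝒮 ⊆ 𝒟)
    (E : Set α → Set α)
    (hEsub : ∀ Q ∈ 𝒮, E Q ⊆ Q)
    (hEmeas : ∀ Q ∈ 𝒮, MeasurableSet (E Q))
    (hEdisj : 𝒮.PairwiseDisjoint E)
    (hEsparse : ∀ Q ∈ 𝒮, μ Q ≤ ENNReal.ofReal η⁻¹ * μ (E Q))
    (f g : α → ℝ≥0∞) (hfm : Measurable f) (hgm : Measurable g) :
    ∑' Q : 𝒮, eAvg μ Q (ENNReal.ofReal p₀) f * eAvg μ Q (ENNReal.ofReal q₀') g * μ Q ≤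
      ENNReal.ofReal
          (η⁻¹ * conjR (p / p₀) ^ (1 / p₀) * conjR (conjR p / q₀') ^ (1 / q₀')) *
        (∫⁻ x, f x ^ p ∂μ) ^ (1 / p) * (∫⁻ x, g x ^ conjR p ∂μ) ^ (1 / conjR p) := by
  have hp₀0 : 0 < p₀ := by linarith
  have hp1 : 1 < p := by linarith
  obtain ⟨hq₀'0, hq₀'p'⟩ : 0 < q₀' ∧ q₀' < conjR p :=
    hq₀' ▸ pos_and_lt_conjR_of_ofReal_lt hp1 hq₀
  have hcf : 0 ≤ conjR (p / p₀) ^ (1 / p₀) := Real.rpow_nonneg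
    (holderConjugate_conjR ((one_lt_div hp₀0).2 hp)).symm.nonneg _
  have hcg : 0 ≤ conjR (conjR p / q₀') ^ (1 / q₀') := Real.rpow_nonneg
    (holderConjugate_conjR ((one_lt_div hq₀'0).2 hq₀'p')).symm.nonneg _
  have h𝒮c : 𝒮.Countable := hcount.mono h𝒮
  calc ∑' Q : 𝒮, eAvg μ Q (ENNReal.ofReal p₀) f * eAvg μ Q (ENNReal.ofReal q₀') g * μ Q
      ≤ ENNReal.ofReal η⁻¹ *
          ∫⁻ x, powMaximalFunction μ 𝒮 p₀ f x * powMaximalFunction μ 𝒮 q₀' g x ∂μ :=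
        tsum_mul_measure_le_of_sparse h𝒮c hEsub hEmeas hEdisj hEsparse fun Q hQ x hx =>
          mul_le_mul' (eAvg_le_powMaximalFunction hp₀0 hQ hx f)
            (eAvg_le_powMaximalFunction hq₀'0 hQ hx g)
    _ ≤ ENNReal.ofReal η⁻¹ *
          (ENNReal.ofReal (conjR (p / p₀) ^ (1 / p₀)) * (∫⁻ x, f x ^ p ∂μ) ^ (1 / p) *
            (ENNReal.ofReal (conjR (conjR p / q₀') ^ (1 / q₀')) *
              (∫⁻ x, g x ^ conjR p ∂μ) ^ (1 / conjR p))) :=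
        mul_le_mul_right ((IsNested.mono hnest h𝒮).lintegral_powMaximalFunction_mul_le h𝒮c
          (fun Q hQ => hmeas Q (h𝒮 hQ)) (fun Q hQ => (hfin Q (h𝒮 hQ)).2.ne) hfm hgm hp1 hp₀0 hp
          hq₀'0 hq₀'p') _
    _ = _ := by
        rw [ENNReal.ofReal_mul' hcg, ENNReal.ofReal_mul' hcf]
        ring

/-- Unweighted bound for sparse forms: for `1 ≤ p₀ < p < q₀ ≤ ∞` and an `η`-sparse collection
`𝒮` of dyadic cubes,
`Σ_{Q∈𝒮} ⟨f⟩_{p₀,Q}⟨g⟩_{q₀',Q}|Q| ≤ η⁻¹ ((p/p₀)')^{1/p₀} ((p'/q₀')')^{1/q₀'} ‖f‖_p ‖g‖_{p'}`. -/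
theorem stmt_14 {α : Type*} [MeasurableSpace α] (μ : Measure α)
    (𝒟 : Set (Set α)) (hcount : 𝒟.Countable)
    (hmeas : ∀ Q ∈ 𝒟, MeasurableSet Q)
    (hfin : ∀ Q ∈ 𝒟, 0 < μ Q ∧ μ Q < ⊤)
    (hnest : ∀ Q ∈ 𝒟, ∀ Q' ∈ 𝒟, Disjoint Q Q' ∨ Q ⊆ Q' ∨ Q' ⊆ Q)
    (p₀ p : ℝ) (q₀ : ℝ≥0∞) (hp₀ : 1 ≤ p₀) (hp : p₀ < p) (hq₀ : ENNReal.ofReal p < q₀)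
    (q₀' : ℝ) (hq₀' : q₀' = if q₀ = ∞ then 1 else q₀.toReal / (q₀.toReal - 1))
    (η : ℝ) (hη0 : 0 < η) (hη1 : η ≤ 1)
    (𝒮 : Set (Set α)) (h𝒮 : 𝒮 ⊆ 𝒟)
    (E : Set α → Set α)
    (hEsub : ∀ Q ∈ 𝒮, E Q ⊆ Q)
    (hEmeas : ∀ Q ∈ 𝒮, MeasurableSet (E Q))
    (hEdisj : 𝒮.PairwiseDisjoint E)
    (hEsparse : ∀ Q ∈ 𝒮, μ Q ≤ ENNReal.ofReal η⁻¹ * μ (E Q))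
    (f g : α → ℝ≥0∞) (hfm : Measurable f) (hgm : Measurable g) :
    ∑' Q : 𝒮, eAvg μ Q (ENNReal.ofReal p₀) f * eAvg μ Q (ENNReal.ofReal q₀') g * μ Q ≤
      ENNReal.ofReal
          (η⁻¹ * conjR (p / p₀) ^ (1 / p₀) * conjR (conjR p / q₀') ^ (1 / q₀')) *
        (∫⁻ x, f x ^ p ∂μ) ^ (1 / p) * (∫⁻ x, g x ^ conjR p ∂μ) ^ (1 / conjR p) :=
  stmt_14_general μ 𝒟 hcount hmeas hfin hnest p₀ p q₀ hp₀ hp hq₀ q₀' hq₀' η 𝒮 h𝒮 E hEsub hEmeas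
    hEdisj hEsparse f g hfm hgm
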